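/- arXiv:2309.13830 — 3 statements merged into one kernel-verified Lean document; each statement's English description precedes it below -/
import Mathlib

section
/- For a random variable D with CDF F, the quantity q* = inf{q ≥ 0 : F(q) ≥ ρ} with ρ = b/(b+h) minimizes the newsvendor cost C(q) = E[b(D−q)⁺ + h(q−D)⁺] over q ∈ ℝ, assuming D is nonnegative and integrable and b,h > 0. -/
/-!
Only the law `ν` of `D` matters. For fixed demand `d` the cost `q ↦ b (d - q)⁺ + h (q - d)⁺` is
convex with slopes `-b` and `h`, so for any `A` between `Iio t` and `Iic t` the subgradient
inequality integrates to `C q ≥ C t + (q - t) ((b + h) ν(A) - b)`. At `t = q*`, right-continuity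
of `F` gives `F q* ≥ ρ`, which settles `q ≥ q*` with `A = Iic q*`; minimality of `q*` together with
`D ≥ 0` gives `ν (Iio q*) ≤ ρ`, which settles `q ≤ q*` with `A = Iio q*`.
-/

open MeasureTheory ProbabilityTheory Set Filter Topology

namespace Newsvendor

def cost (b h q d : ℝ) : ℝ := b * max (d - q) 0 + h * max (q - d) 0

section Pointwise

variable {b h q d : ℝ}

lemma cost_of_le (hdq : d ≤ q) : cost b h q d = h * (q - d) := by
  simp [cost, max_eq_right (sub_nonpos.2 hdq), max_eq_left (sub_nonneg.2 hdq)]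

lemma cost_of_ge (hqd : q ≤ d) : cost b h q d = b * (d - q) := by
  simp [cost, max_eq_left (sub_nonneg.2 hqd), max_eq_right (sub_nonpos.2 hqd)]

lemma mul_sub_le_cost_overage (hb : 0 ≤ b) (hh : 0 ≤ h) : h * (q - d) ≤ cost b h q d :=
  le_add_of_nonneg_of_le (mul_nonneg hb (le_max_right _ _))
    (mul_le_mul_of_nonneg_left (le_max_left _ _) hh)

lemma mul_sub_le_cost_underage (hb : 0 ≤ b) (hh : 0 ≤ h) : b * (d - q) ≤ cost b h q d :=
  le_add_of_le_of_nonneg (mul_le_mul_of_nonneg_left (le_max_left _ _) hb)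
    (mul_nonneg hh (le_max_right _ _))

lemma continuous_cost (b h q : ℝ) : Continuous (cost b h q) := by
  unfold cost; fun_prop

/-- Both one-sided slopes of `cost b h · d` at `t` are subgradients there; `A` selects one. -/
lemma cost_add_mul_indicator_le (hb : 0 ≤ b) (hh : 0 ≤ h) {A : Set ℝ} {t : ℝ}
    (hA : A ⊆ Iic t) (hAc : Aᶜ ⊆ Ici t) :
    cost b h t d + (q - t) * (A.indicator (fun _ ↦ b + h) d - b) ≤ cost b h q d := by
  by_cases hd : d ∈ A
  · have hdt : d ≤ t := hA hd
    rw [indicator_of_mem hd, cost_of_le hdt]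
    linarith [mul_sub_le_cost_overage (q := q) (d := d) hb hh]
  · have htd : t ≤ d := hAc hd
    rw [indicator_of_notMem hd, cost_of_ge htd]
    linarith [mul_sub_le_cost_underage (q := q) (d := d) hb hh]

end Pointwise

section Expected

variable {ν : Measure ℝ} [IsProbabilityMeasure ν] {b h t q : ℝ}

lemma integrable_cost (hν : Integrable id ν) (b h q : ℝ) : Integrable (cost b h q) ν := by
  have hpos : Integrable (fun x ↦ max (x - q) 0) ν := (hν.sub (integrable_const q)).pos_part
  have hneg : Integrable (fun x ↦ max (q - x) 0) ν := ((integrable_const q).sub hν).pos_part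
  exact (hpos.const_mul b).add (hneg.const_mul h)

lemma integral_cost_add_mul_le (hν : Integrable id ν) (hb : 0 ≤ b) (hh : 0 ≤ h) {A : Set ℝ}
    (hAm : MeasurableSet A) (hA : A ⊆ Iic t) (hAc : Aᶜ ⊆ Ici t) :
    ∫ x, cost b h t x ∂ν + (q - t) * ((b + h) * ν.real A - b) ≤ ∫ x, cost b h q x ∂ν := by
  have hind : Integrable (fun x ↦ A.indicator (fun _ ↦ b + h) x - b) ν :=
    ((integrable_const _).indicator hAm).sub (integrable_const _)
  have hmean : ∫ x, (A.indicator (fun _ ↦ b + h) x - b) ∂ν = (b + h) * ν.real A - b := by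
    rw [integral_sub ((integrable_const _).indicator hAm) (integrable_const _),
      integral_indicator_const _ hAm, integral_const, probReal_univ, smul_eq_mul, smul_eq_mul,
      mul_comm, one_mul]
  calc ∫ x, cost b h t x ∂ν + (q - t) * ((b + h) * ν.real A - b)
      = ∫ x, (cost b h t x + (q - t) * (A.indicator (fun _ ↦ b + h) x - b)) ∂ν := by
        rw [integral_add (integrable_cost hν b h t) (hind.const_mul _), integral_const_mul, hmean]
    _ ≤ ∫ x, cost b h q x ∂ν :=
        integral_mono ((integrable_cost hν b h t).add (hind.const_mul _))
          (integrable_cost hν b h q) fun _ ↦ cost_add_mul_indicator_le hb hh hA hAc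

lemma integral_cost_le_of_le (hν : Integrable id ν) (hb : 0 ≤ b) (hh : 0 ≤ h)
    (ht : b ≤ (b + h) * cdf ν t) (htq : t ≤ q) :
    ∫ x, cost b h t x ∂ν ≤ ∫ x, cost b h q x ∂ν := by
  have key := integral_cost_add_mul_le (t := t) (q := q) hν hb hh measurableSet_Iic subset_rfl
    (compl_Iic.trans_subset Ioi_subset_Ici_self)
  rw [← cdf_eq_real] at key
  nlinarith [mul_nonneg (sub_nonneg.2 htq) (sub_nonneg.2 ht)]

lemma integral_cost_le_of_ge (hν : Integrable id ν) (hb : 0 ≤ b) (hh : 0 ≤ h)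
    (ht : (b + h) * ν.real (Iio t) ≤ b) (hqt : q ≤ t) :
    ∫ x, cost b h t x ∂ν ≤ ∫ x, cost b h q x ∂ν := by
  have key := integral_cost_add_mul_le (t := t) (q := q) hν hb hh measurableSet_Iio
    Iio_subset_Iic_self compl_Iio.subset
  nlinarith [mul_nonneg (sub_nonneg.2 hqt) (sub_nonneg.2 ht)]

end Expected

section Quantile

variable {ν : Measure ℝ} {ρ a : ℝ}

lemma measureReal_Iio_le_of_forall_lt_cdf_le [IsProbabilityMeasure ν] {x : ℝ}
    (h : ∀ t < x, cdf ν t ≤ ρ) : ν.real (Iio x) ≤ ρ := by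
  have hleft : Function.leftLim (cdf ν) x ≤ ρ :=
    le_of_tendsto ((monotone_cdf ν).tendsto_leftLim x) (eventually_nhdsWithin_of_forall h)
  have hmeas : ν (Iio x) = ENNReal.ofReal (Function.leftLim (cdf ν) x) := by
    simpa only [measure_cdf, sub_zero] using (cdf ν).measure_Iio (tendsto_cdf_atBot ν) x
  exact ENNReal.toReal_le_of_le_ofReal ((cdf_nonneg ν _).trans (h _ (sub_one_lt x)))
    (hmeas.trans_le (ENNReal.ofReal_le_ofReal hleft))

lemma nonempty_quantile_set (hρ : ρ < 1) : {q | a ≤ q ∧ ρ ≤ cdf ν q}.Nonempty :=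
  (((tendsto_cdf_atTop ν).eventually (eventually_ge_nhds hρ)).and (eventually_ge_atTop a)).exists
    |>.imp fun _ hq ↦ ⟨hq.2, hq.1⟩

lemma le_cdf_sInf (hρ : ρ < 1) : ρ ≤ cdf ν (sInf {q | a ≤ q ∧ ρ ≤ cdf ν q}) := by
  set S := {q | a ≤ q ∧ ρ ≤ cdf ν q}
  have hbdd : BddBelow S := ⟨a, fun _ hq ↦ hq.1⟩
  refine ContinuousWithinAt.closure_le (csInf_mem_closure (nonempty_quantile_set hρ) hbdd)
    continuousWithinAt_const ?_ fun _ hq ↦ hq.2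
  exact ((cdf ν).right_continuous _).mono fun _ hq ↦ csInf_le hbdd hq

lemma measureReal_Iio_sInf_le [IsProbabilityMeasure ν] (hρ0 : 0 ≤ ρ) (ha : ν (Iio a) = 0) :
    ν.real (Iio (sInf {q | a ≤ q ∧ ρ ≤ cdf ν q})) ≤ ρ := by
  refine measureReal_Iio_le_of_forall_lt_cdf_le fun t ht ↦ ?_
  rcases lt_or_ge t a with hta | hat
  · rw [cdf_eq_real, measureReal_mono_null (Iic_subset_Iio.2 hta) (by simp [Measure.real, ha])]
    exact hρ0
  · by_contra! hlt
    exact ht.not_ge (csInf_le ⟨a, fun _ hq ↦ hq.1⟩ ⟨hat, hlt.le⟩)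

end Quantile

theorem integral_cost_sInf_le {ν : Measure ℝ} [IsProbabilityMeasure ν] (hν : Integrable id ν)
    {a b h : ℝ} (ha : ν (Iio a) = 0) (hb : 0 < b) (hh : 0 < h) (q : ℝ) :
    ∫ x, cost b h (sInf {q | a ≤ q ∧ b / (b + h) ≤ cdf ν q}) x ∂ν ≤ ∫ x, cost b h q x ∂ν := by
  have hbh : 0 < b + h := add_pos hb hh
  have hρ1 : b / (b + h) < 1 := (div_lt_one hbh).2 (lt_add_of_pos_right b hh)
  rcases le_total (sInf {q | a ≤ q ∧ b / (b + h) ≤ cdf ν q}) q with hq | hq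
  · exact integral_cost_le_of_le hν hb.le hh.le ((div_le_iff₀' hbh).1 (le_cdf_sInf hρ1)) hq
  · exact integral_cost_le_of_ge hν hb.le hh.le
      ((le_div_iff₀' hbh).1 (measureReal_Iio_sInf_le (by positivity) ha)) hq

end Newsvendor

theorem newsvendor_quantile_optimal_general
    {Ω : Type*} [MeasurableSpace Ω] (μ : Measure Ω) [IsProbabilityMeasure μ]
    (D : Ω → ℝ) (b h : ℝ) (hb : 0 < b) (hh : 0 < h)
    (hD0 : ∀ ω, 0 ≤ D ω) (hDint : Integrable D μ)
    (F : ℝ → ℝ) (hF : ∀ t, F t = (μ {ω | D ω ≤ t}).toReal)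
    (C : ℝ → ℝ)
    (hC : ∀ q, C q = ∫ ω, (b * max (D ω - q) 0 + h * max (q - D ω) 0) ∂μ)
    (ρ : ℝ) (hρ : ρ = b / (b + h))
    (qstar : ℝ) (hq : qstar = sInf {q : ℝ | 0 ≤ q ∧ ρ ≤ F q}) :
    ∀ q : ℝ, C qstar ≤ C q := by
  have hDm : AEMeasurable D μ := hDint.aemeasurable
  have : IsProbabilityMeasure (μ.map D) := Measure.isProbabilityMeasure_map hDm
  have hF_cdf : F = cdf (μ.map D) := funext fun t ↦ by
    rw [hF, cdf_eq_real, map_measureReal_apply_of_aemeasurable hDm measurableSet_Iic]; rfl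
  have hC_law : ∀ q, C q = ∫ x, Newsvendor.cost b h q x ∂(μ.map D) := fun q ↦ by
    rw [hC, integral_map hDm (Newsvendor.continuous_cost b h q).aestronglyMeasurable]; rfl
  have hlaw_int : Integrable id (μ.map D) :=
    (integrable_map_measure aestronglyMeasurable_id hDm).2 hDint
  have hlaw_nonneg : μ.map D (Iio 0) = 0 := by
    rw [Measure.map_apply_of_aemeasurable hDm measurableSet_Iio]
    simp [Set.preimage, (hD0 _).not_gt]
  intro q
  rw [hC_law, hC_law, hq, hρ, hF_cdf]
  exact Newsvendor.integral_cost_sInf_le hlaw_int hlaw_nonneg hb hh q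

/-- The quantile `q* = inf{q ≥ 0 : F(q) ≥ ρ}` with `ρ = b/(b+h)` minimizes the
newsvendor cost `C(q) = E[b(D−q)⁺ + h(q−D)⁺]`. -/
theorem newsvendor_quantile_optimal
    {Ω : Type*} [MeasurableSpace Ω] (μ : Measure Ω) [IsProbabilityMeasure μ]
    (D : Ω → ℝ) (b h : ℝ) (hb : 0 < b) (hh : 0 < h)
    (hD0 : ∀ ω, 0 ≤ D ω) (hDint : Integrable D μ) (hDmeas : Measurable D)
    (F : ℝ → ℝ) (hF : ∀ t, F t = (μ {ω | D ω ≤ t}).toReal)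
    (C : ℝ → ℝ)
    (hC : ∀ q, C q = ∫ ω, (b * max (D ω - q) 0 + h * max (q - D ω) 0) ∂μ)
    (ρ : ℝ) (hρ : ρ = b / (b + h))
    (qstar : ℝ) (hq : qstar = sInf {q : ℝ | 0 ≤ q ∧ ρ ≤ F q}) :
    ∀ q : ℝ, C qstar ≤ C q :=
  newsvendor_quantile_optimal_general μ D b h hb hh hD0 hDint F hF C hC ρ hρ qstar hq
end

section
/- Let X be uniformly distributed on [−1,1]ᵖ and f_ρ(x) = A + xᵀBx + Cᵀx with B symmetric. Then for every constant d ∈ ℝ, E[(f_ρ(X) − d)²] ≥ (2/9)·tr(B²) − (2/15)·Σᵢ Bᵢᵢ² + (1/3)·CᵀC, and this lower bound is strictly positive if B ≠ 0 or C ≠ 0. -/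
/-!
Independence identifies the joint law of the `X i` with the product of the uniform laws, so the
expectation becomes an integral over the product measure. For a product of centred laws with
second moment `s`, fourth moment `κ` and vanishing third moment, monomials of degree one and three
integrate to zero, `E[xᵢxⱼ] = s δᵢⱼ`, and
`E[xᵢxⱼxₖxₗ] = s²(δᵢⱼδₖₗ + δᵢₖδⱼₗ + δᵢₗδⱼₖ) + (κ - 3s²) δᵢⱼₖₗ`.
Expanding the square, `E[(f(X) - d)²]` is the squared bias `(A - d + s tr B)²` plus the variance
`s²(tr BBᵀ + tr B²) + (κ - 3s²) Σ Bᵢᵢ² + s |C|²`; for the uniform law `s = 1/3`, `κ = 1/5`.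
The variance is positive since `Σ Bᵢᵢ² ≤ tr(BBᵀ) = ‖B‖²_F` and `2/9 > 2/15`.
-/

open MeasureTheory ProbabilityTheory
open scoped ENNReal Matrix

section ProductMoments

variable {ι : Type*} [Fintype ι] {ν : Measure ℝ} [IsProbabilityMeasure ν]

theorem integrable_pi_of_continuous {K : Set ℝ} (hK : IsCompact K) (hν : ∀ᵐ t ∂ν, t ∈ K)
    {F : (ι → ℝ) → ℝ} (hF : Continuous F) : Integrable F (Measure.pi fun _ => ν) := by
  obtain ⟨C, hC⟩ := (isCompact_univ_pi fun _ => hK).exists_bound_of_continuousOn hF.continuousOn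
  have hcube : ∀ᵐ x ∂Measure.pi (fun _ : ι => ν), x ∈ Set.univ.pi fun _ => K := by
    simpa only [Set.mem_univ_pi] using
      ae_all_iff.2 fun m => Measure.tendsto_eval_ae_ae (i := m) |>.eventually hν
  exact .of_bound hF.aestronglyMeasurable C (hcube.mono hC)

variable [DecidableEq ι]

theorem integral_pi_list_prod (l : List ι) :
    ∫ x, (l.map x).prod ∂Measure.pi (fun _ => ν) = ∏ m ∈ l.toFinset, ∫ t, t ^ l.count m ∂ν := by
  have hsub {f : ι → ℝ} (hf : ∀ m, l.count m = 0 → f m = 1) :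
      ∏ m ∈ l.toFinset, f m = ∏ m, f m :=
    Finset.prod_subset (Finset.subset_univ _) fun m _ hm =>
      hf m (List.count_eq_zero_of_not_mem (by simpa using hm))
  have hx (x : ι → ℝ) : (l.map x).prod = ∏ m, x m ^ l.count m := by
    rw [Finset.prod_list_map_count, hsub fun m h => by rw [h, pow_zero]]
  simp_rw [hx]
  rw [hsub fun m h => by simp [h]]
  exact integral_fintype_prod_eq_prod (fun m t => t ^ l.count m)

variable (h1 : ∫ t, t ∂ν = 0)
include h1

theorem integral_pi_eval (i : ι) : ∫ x, x i ∂Measure.pi (fun _ => ν) = 0 := by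
  simpa [h1] using integral_pi_list_prod (ν := ν) [i]

theorem integral_pi_eval_mul_eval (i j : ι) :
    ∫ x, x i * x j ∂Measure.pi (fun _ => ν) = if i = j then ∫ t, t ^ 2 ∂ν else 0 := by
  have := integral_pi_list_prod (ν := ν) [i, j]
  simp only [List.map_cons, List.map_nil, List.prod_cons, List.prod_nil, mul_one] at this
  rw [this]
  by_cases hij : i = j
  · subst hij; simp
  · simp [hij, Ne.symm hij, List.count_cons, h1]

theorem integral_pi_eval_mul₃ (h3 : ∫ t, t ^ 3 ∂ν = 0) (i j k : ι) :
    ∫ x, x i * x j * x k ∂Measure.pi (fun _ => ν) = 0 := by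
  have := integral_pi_list_prod (ν := ν) [i, j, k]
  simp only [List.map_cons, List.map_nil, List.prod_cons, List.prod_nil, mul_one,
    ← mul_assoc] at this
  rw [this]
  by_cases hij : i = j <;> by_cases hik : i = k <;> by_cases hjk : j = k <;>
    subst_vars <;> simp_all [List.count_cons, Ne.symm]

theorem integral_pi_eval_mul₄ (i j k l : ι) :
    ∫ x, x i * x j * x k * x l ∂Measure.pi (fun _ => ν)
      = (∫ t, t ^ 2 ∂ν) ^ 2 * ((if i = j then 1 else 0) * (if k = l then 1 else 0)
          + (if i = k then 1 else 0) * (if j = l then 1 else 0)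
          + (if i = l then 1 else 0) * (if j = k then 1 else 0))
        + (∫ t, t ^ 4 ∂ν - 3 * (∫ t, t ^ 2 ∂ν) ^ 2)
          * ((if i = j then 1 else 0) * (if i = k then 1 else 0) * (if i = l then 1 else 0)) := by
  have := integral_pi_list_prod (ν := ν) [i, j, k, l]
  simp only [List.map_cons, List.map_nil, List.prod_cons, List.prod_nil, mul_one,
    ← mul_assoc] at this
  rw [this]
  -- Every equality pattern in which some index occurs exactly once has a vanishing mean factor.
  by_cases hij : i = j <;> by_cases hik : i = k <;> by_cases hil : i = l <;>
    by_cases hjk : j = k <;> by_cases hjl : j = l <;> by_cases hkl : k = l <;>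
    subst_vars <;> simp_all [List.count_cons, Ne.symm] <;> ring

end ProductMoments

section QuadraticForm

variable {ι : Type*} [Fintype ι] [DecidableEq ι] {ν : Measure ℝ} [IsProbabilityMeasure ν]
  {K : Set ℝ} (hK : IsCompact K) (hν : ∀ᵐ t ∂ν, t ∈ K) (h1 : ∫ t, t ∂ν = 0)
  (B : Matrix ι ι ℝ) (C : ι → ℝ)
include hK hν h1

theorem integral_pi_quadForm :
    ∫ x, ∑ i, ∑ j, x i * B i j * x j ∂Measure.pi (fun _ => ν) = (∫ t, t ^ 2 ∂ν) * B.trace := by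
  simp_rw [mul_right_comm _ (B _ _)]
  simp (disch := (intros; exact integrable_pi_of_continuous hK hν (by fun_prop))) only
    [integral_finsetSum, integral_mul_const, integral_pi_eval_mul_eval h1]
  simp [Matrix.trace, Finset.mul_sum]

theorem integral_pi_linear : ∫ x, ∑ i, C i * x i ∂Measure.pi (fun _ => ν) = 0 := by
  simp (disch := (intros; exact integrable_pi_of_continuous hK hν (by fun_prop))) only
    [integral_finsetSum, integral_const_mul, integral_pi_eval h1]
  simp

theorem integral_pi_linear_sq :
    ∫ x, (∑ i, C i * x i) ^ 2 ∂Measure.pi (fun _ => ν) = (∫ t, t ^ 2 ∂ν) * ∑ i, C i ^ 2 := by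
  have hexp (x : ι → ℝ) : (∑ i, C i * x i) ^ 2 = ∑ i, ∑ j, C i * C j * (x i * x j) := by
    simp only [sq, Finset.sum_mul_sum]
    congr! 2 with i _ j _
    ring
  simp_rw [hexp]
  simp (disch := (intros; exact integrable_pi_of_continuous hK hν (by fun_prop))) only
    [integral_finsetSum, integral_const_mul, integral_pi_eval_mul_eval h1]
  simp [Finset.sum_mul, sq, mul_comm]

theorem integral_pi_quadForm_mul_linear (h3 : ∫ t, t ^ 3 ∂ν = 0) :
    ∫ x, (∑ i, ∑ j, x i * B i j * x j) * (∑ k, C k * x k) ∂Measure.pi (fun _ => ν) = 0 := by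
  have hexp (x : ι → ℝ) : (∑ i, ∑ j, x i * B i j * x j) * (∑ k, C k * x k)
      = ∑ i, ∑ j, ∑ k, B i j * C k * (x i * x j * x k) := by
    simp only [Finset.sum_mul]
    simp only [Finset.mul_sum]
    congr! 3 with i _ j _ k _
    ring
  simp_rw [hexp]
  simp (disch := (intros; exact integrable_pi_of_continuous hK hν (by fun_prop))) only
    [integral_finsetSum, integral_const_mul, integral_pi_eval_mul₃ h1 h3]
  simp

theorem integral_pi_quadForm_sq :
    ∫ x, (∑ i, ∑ j, x i * B i j * x j) ^ 2 ∂Measure.pi (fun _ => ν)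
      = (∫ t, t ^ 2 ∂ν) ^ 2 * (B.trace ^ 2 + (B * Bᵀ).trace + (B * B).trace)
        + (∫ t, t ^ 4 ∂ν - 3 * (∫ t, t ^ 2 ∂ν) ^ 2) * ∑ i, B i i ^ 2 := by
  have hexp (x : ι → ℝ) : (∑ i, ∑ j, x i * B i j * x j) ^ 2
      = ∑ i, ∑ j, ∑ k, ∑ l, B i j * B k l * (x i * x j * x k * x l) := by
    simp only [sq, Finset.sum_mul]
    simp only [Finset.mul_sum]
    congr! 4 with i _ j _ k _ l _
    ring
  simp_rw [hexp]
  simp (disch := (intros; exact integrable_pi_of_continuous hK hν (by fun_prop))) only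
    [integral_finsetSum, integral_const_mul, integral_pi_eval_mul₄ h1]
  generalize ∫ t, t ^ 2 ∂ν = s
  generalize ∫ t, t ^ 4 ∂ν = κ
  simp only [mul_add, mul_ite, mul_one, mul_zero, Finset.sum_add_distrib, Finset.sum_ite_eq,
    Finset.mem_univ, if_true, Finset.sum_const_zero, Finset.sum_ite_irrel]
  simp only [Matrix.trace, Matrix.diag, Matrix.mul_apply, Matrix.transpose_apply, sq,
    Finset.mul_sum, mul_comm, mul_left_comm, mul_assoc]

theorem integral_pi_quadratic_sub_sq (h3 : ∫ t, t ^ 3 ∂ν = 0) (A d : ℝ) :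
    ∫ x, (A + (∑ i, ∑ j, x i * B i j * x j) + (∑ i, C i * x i) - d) ^ 2 ∂Measure.pi (fun _ => ν)
      = (A - d + (∫ t, t ^ 2 ∂ν) * B.trace) ^ 2
        + ((∫ t, t ^ 2 ∂ν) ^ 2 * ((B * Bᵀ).trace + (B * B).trace)
          + (∫ t, t ^ 4 ∂ν - 3 * (∫ t, t ^ 2 ∂ν) ^ 2) * ∑ i, B i i ^ 2
          + (∫ t, t ^ 2 ∂ν) * ∑ i, C i ^ 2) := by
  have hexp (x : ι → ℝ) : (A + (∑ i, ∑ j, x i * B i j * x j) + (∑ i, C i * x i) - d) ^ 2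
      = (A - d) ^ 2 + 2 * (A - d) * (∑ i, ∑ j, x i * B i j * x j)
        + 2 * (A - d) * (∑ i, C i * x i) + (∑ i, ∑ j, x i * B i j * x j) ^ 2
        + 2 * ((∑ i, ∑ j, x i * B i j * x j) * (∑ k, C k * x k)) + (∑ i, C i * x i) ^ 2 := by
    ring
  simp_rw [hexp]
  simp (disch := exact integrable_pi_of_continuous hK hν (by fun_prop)) only
    [integral_add, integral_const_mul, integral_const, probReal_univ, one_smul,
    integral_pi_quadForm hK hν h1, integral_pi_linear hK hν h1, integral_pi_quadForm_sq hK hν h1,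
    integral_pi_quadForm_mul_linear hK hν h1 B C h3, integral_pi_linear_sq hK hν h1]
  ring

end QuadraticForm

theorem Matrix.sum_diag_sq_le_trace_mul_transpose {n R : Type*} [Fintype n] [CommRing R]
    [LinearOrder R] [IsStrictOrderedRing R] (B : Matrix n n R) :
    ∑ i, B i i ^ 2 ≤ (B * Bᵀ).trace := by
  simp only [Matrix.trace, Matrix.diag, Matrix.mul_apply, Matrix.transpose_apply, ← sq]
  exact Finset.sum_le_sum fun i _ =>
    Finset.single_le_sum (f := fun j => B i j ^ 2) (fun j _ => sq_nonneg _) (Finset.mem_univ i)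

theorem Matrix.trace_mul_transpose_pos {n : Type*} [Fintype n] {B : Matrix n n ℝ} (hB : B ≠ 0) :
    0 < (B * Bᵀ).trace := by
  rw [← Matrix.conjTranspose_eq_transpose_of_trivial]
  exact (Matrix.posSemidef_self_mul_conjTranspose B).trace_nonneg.lt_of_ne'
    (Matrix.trace_mul_conjTranspose_self_eq_zero_iff.not.2 hB)

theorem quadratic_variance_pos {n : Type*} [Fintype n] {B : Matrix n n ℝ} {C : n → ℝ}
    (hB : B.IsSymm) (hnz : B ≠ 0 ∨ C ≠ 0) :
    0 < 2/9 * (B * B).trace - 2/15 * ∑ i, B i i ^ 2 + 1/3 * ∑ i, C i * C i := by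
  have hdiag := B.sum_diag_sq_le_trace_mul_transpose
  have hdiag₀ : 0 ≤ ∑ i, B i i ^ 2 := Finset.sum_nonneg fun i _ => sq_nonneg _
  have hC₀ : 0 ≤ ∑ i, C i * C i := Finset.sum_nonneg fun i _ => mul_self_nonneg _
  have htr : (B * B).trace = (B * Bᵀ).trace := by rw [hB.eq]
  rw [htr]
  rcases hnz with hB₀ | hC
  · linarith [B.trace_mul_transpose_pos hB₀]
  · have hCpos : 0 < ∑ i, C i * C i := hC₀.lt_of_ne' (dotProduct_self_eq_zero.not.2 hC)
    linarith

noncomputable def uniformIcc : Measure ℝ := (2 : ℝ≥0∞)⁻¹ • volume.restrict (Set.Icc (-1) 1)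

instance : IsProbabilityMeasure uniformIcc :=
  ⟨by simp [uniformIcc, Real.volume_Icc, one_add_one_eq_two, ENNReal.inv_mul_cancel]⟩

theorem ae_mem_Icc_uniformIcc : ∀ᵐ t ∂uniformIcc, t ∈ Set.Icc (-1 : ℝ) 1 :=
  Measure.ae_smul_measure (ae_restrict_mem measurableSet_Icc) _

theorem integral_pow_uniformIcc (k : ℕ) :
    ∫ t, t ^ k ∂uniformIcc = (1 - (-1) ^ (k + 1)) / (2 * (k + 1)) := by
  rw [uniformIcc, integral_smul_measure, integral_Icc_eq_integral_Ioc,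
    ← intervalIntegral.integral_of_le (by norm_num), integral_pow]
  simp only [ENNReal.toReal_inv, ENNReal.toReal_ofNat, one_pow, smul_eq_mul]
  field_simp

/-- Inconsistency of feature-independent rules for the quadratic demand model:
for `X` uniform on `[−1,1]ᵖ` and `f_ρ(x) = A + xᵀBx + Cᵀx`, every constant `d`
satisfies `E[(f_ρ(X)−d)²] ≥ (2/9)tr(B²) − (2/15)ΣBᵢᵢ² + (1/3)CᵀC > 0`
whenever `B ≠ 0` or `C ≠ 0`. -/
theorem feature_independent_inconsistency_QD
    {Ω : Type*} [MeasurableSpace Ω] (μ : Measure Ω) [IsProbabilityMeasure μ]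
    (p : ℕ) (X : Fin p → Ω → ℝ)
    (hmeas : ∀ i, Measurable (X i))
    (hindep : iIndepFun X μ)
    (hunif : ∀ i, Measure.map (X i) μ
        = (2 : ℝ≥0∞)⁻¹ • (volume.restrict (Set.Icc (-1 : ℝ) 1)))
    (A : ℝ) (C : Fin p → ℝ) (B : Matrix (Fin p) (Fin p) ℝ) (hB : B.IsSymm)
    (hnz : B ≠ 0 ∨ C ≠ 0) :
    (∀ d : ℝ,
      2/9 * Matrix.trace (B * B) - 2/15 * ∑ i, (B i i)^2 + 1/3 * ∑ i, C i * C i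
        ≤ ∫ ω, (A + (∑ i, ∑ j, X i ω * B i j * X j ω) + (∑ i, C i * X i ω) - d)^2 ∂μ) ∧
    0 < 2/9 * Matrix.trace (B * B) - 2/15 * ∑ i, (B i i)^2 + 1/3 * ∑ i, C i * C i := by
  refine ⟨fun d => ?_, quadratic_variance_pos hB hnz⟩
  have hlaw : μ.map (fun ω i => X i ω) = Measure.pi fun _ => uniformIcc := by
    rw [(iIndepFun_iff_map_fun_eq_pi_map fun i => (hmeas i).aemeasurable).1 hindep]
    simp_rw [hunif]
    rfl
  have h1 : ∫ t, t ∂uniformIcc = 0 := by simpa using integral_pow_uniformIcc 1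
  have h2 : ∫ t, t ^ 2 ∂uniformIcc = 1 / 3 := by norm_num [integral_pow_uniformIcc]
  have h3 : ∫ t, t ^ 3 ∂uniformIcc = 0 := by norm_num [integral_pow_uniformIcc]
  have h4 : ∫ t, t ^ 4 ∂uniformIcc = 1 / 5 := by norm_num [integral_pow_uniformIcc]
  have hchange : ∫ ω, (A + (∑ i, ∑ j, X i ω * B i j * X j ω) + (∑ i, C i * X i ω) - d) ^ 2 ∂μ
      = ∫ x, (A + (∑ i, ∑ j, x i * B i j * x j) + (∑ i, C i * x i) - d) ^ 2
          ∂Measure.pi fun _ => uniformIcc := by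
    rw [← hlaw, integral_map (measurable_pi_lambda _ hmeas).aemeasurable
      (Continuous.aestronglyMeasurable (by fun_prop))]
  rw [hchange, integral_pi_quadratic_sub_sq isCompact_Icc ae_mem_Icc_uniformIcc h1 B C h3,
    h2, h4, hB.eq]
  linarith [sq_nonneg (A - d + 1 / 3 * B.trace),
    (Finset.sum_congr rfl fun i _ => sq (C i) : ∑ i, C i ^ 2 = ∑ i, C i * C i)]
end

section
/- Let X be uniformly distributed on [−1,1]ᵖ and f_ρ(x) = A + xᵀBx + Cᵀx with B symmetric and B ≠ 0. Then for every affine function g(x) = d + Eᵀx with d ∈ ℝ, E ∈ ℝᵖ, E[(f_ρ(X) − g(X))²] ≥ (2/9)·tr(B²) − (2/15)·Σᵢ Bᵢᵢ² > 0. -/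
/-!
Write the residual as `c + Q + ∑ Lᵢ Xᵢ` with `Q = ∑ᵢⱼ Xᵢ Bᵢⱼ Xⱼ`. A mixed moment of independent
centred coordinates vanishes as soon as one index occurs exactly once; together with `E Xᵢ³ = 0`
this makes `Q` uncorrelated with every `Xᵢ`, so
`E[(c + Q + ∑ Lᵢ Xᵢ)²] ≥ Var(Q + ∑ Lᵢ Xᵢ) = Var Q + Var(∑ Lᵢ Xᵢ) ≥ Var Q`.
The same vanishing rule gives, with `s = E Xᵢ²` and `m = E Xᵢ⁴`,
`E[XᵢXⱼXₖXₗ] = s²(δᵢⱼδₖₗ + δᵢₖδⱼₗ + δᵢₗδⱼₖ) + (m - 3s²)δᵢⱼδᵢₖδᵢₗ`,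
whence `Var Q = s²(tr BBᵀ + tr B²) + (m - 3s²) ∑ Bᵢᵢ²`. The uniform law on `[-1, 1]` has
`s = 1/3` and `m = 1/5`; the bound is positive because `∑ Bᵢᵢ² ≤ tr B² = ∑ Bᵢⱼ²`
for symmetric `B ≠ 0`.
-/

open MeasureTheory ProbabilityTheory Finset
open scoped ENNReal Matrix

section

variable {Ω ι : Type*} [MeasurableSpace Ω] {μ : Measure Ω} {X : ι → Ω → ℝ}

namespace MeasureTheory

theorem integrable_prod_of_memLp_top [IsFiniteMeasure μ] (hbdd : ∀ i, MemLp (X i) ⊤ μ)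
    {n : ℕ} (κ : Fin n → ι) : Integrable (fun ω => ∏ t, X (κ t) ω) μ := by
  have h := MemLp.prod' (s := univ) (p := fun _ => ⊤) fun t _ => hbdd (κ t)
  simp only [ENNReal.inv_top, sum_const_zero, ENNReal.inv_zero] at h
  exact h.integrable le_top

theorem integral_sum_sum {κ : Type*} [Fintype ι] [Fintype κ] {f : ι → κ → Ω → ℝ}
    (hf : ∀ i j, Integrable (f i j) μ) :
    ∫ ω, ∑ i, ∑ j, f i j ω ∂μ = ∑ i, ∑ j, ∫ ω, f i j ω ∂μ := by
  rw [integral_finsetSum _ fun i _ => integrable_finsetSum _ fun j _ => hf i j]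
  exact sum_congr rfl fun i _ => integral_finsetSum _ fun j _ => hf i j

theorem memLp_top_quadForm [Fintype ι] (hbdd : ∀ i, MemLp (X i) ⊤ μ) (B : Matrix ι ι ℝ) :
    MemLp (fun ω => ∑ i, ∑ j, X i ω * B i j * X j ω) ⊤ μ :=
  memLp_finsetSum _ fun i _ => memLp_finsetSum _ fun j _ =>
    (hbdd j).mul' ((hbdd i).mul_const (B i j))

end MeasureTheory

namespace ProbabilityTheory

section Moments

variable (hX : iIndepFun X μ) (hmeas : ∀ i, Measurable (X i))
include hX hmeas

theorem iIndepFun.integral_prod_eq_zero_of_unique {n : ℕ} (κ : Fin n → ι) (t₀ : Fin n)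
    (hκ : ∀ t ≠ t₀, κ t ≠ κ t₀) (h0 : ∫ ω, X (κ t₀) ω ∂μ = 0) :
    ∫ ω, ∏ t, X (κ t) ω ∂μ = 0 := by
  classical
  set S : Finset ι := {κ t₀}
  set T : Finset ι := (univ.erase t₀).image κ
  have hdisj : Disjoint S T := by
    simp only [S, T, disjoint_singleton_left, mem_image, mem_erase, not_exists, not_and]
    exact fun t ht => hκ t ht.1
  have hind :
      IndepFun (X (κ t₀)) (fun ω => ∏ t ∈ (univ.erase t₀).attach, X (κ t) ω) μ :=
    (hX.indepFun_finset S T hdisj hmeas).comp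
      (φ := fun v : S → ℝ => v ⟨κ t₀, mem_singleton_self _⟩)
      (ψ := fun v : T → ℝ =>
        ∏ t ∈ (univ.erase t₀).attach, v ⟨κ t, mem_image_of_mem κ t.2⟩)
      (by fun_prop) (by fun_prop)
  have hsplit (ω : Ω) :
      ∏ t, X (κ t) ω = X (κ t₀) ω * ∏ t ∈ (univ.erase t₀).attach, X (κ t) ω := by
    rw [prod_attach (univ.erase t₀) (fun t => X (κ t) ω)]
    exact (mul_prod_erase _ _ (mem_univ t₀)).symm
  simp_rw [hsplit]
  rw [hind.integral_fun_mul_eq_mul_integral (hmeas _).aestronglyMeasurable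
    (by fun_prop), h0, zero_mul]

theorem iIndepFun.integral_sq_mul_sq {s : ℝ} (h2 : ∀ i, ∫ ω, X i ω ^ 2 ∂μ = s) {i j : ι}
    (hij : i ≠ j) : ∫ ω, X i ω ^ 2 * X j ω ^ 2 ∂μ = s ^ 2 := by
  have hind := (hX.indepFun hij).comp (measurable_id.pow_const 2) (measurable_id.pow_const 2)
  have h := hind.integral_fun_mul_eq_mul_integral (by fun_prop) (by fun_prop)
  simp only [Function.comp_apply, id] at h
  rw [h, h2, h2, sq]

variable (h1 : ∀ i, ∫ ω, X i ω ∂μ = 0)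
include h1

theorem iIndepFun.integral_mul_eq_ite {s : ℝ} (h2 : ∀ i, ∫ ω, X i ω ^ 2 ∂μ = s)
    [DecidableEq ι] (i j : ι) : ∫ ω, X i ω * X j ω ∂μ = if i = j then s else 0 := by
  split_ifs with hij
  · simp [hij, ← sq, h2]
  · simpa [Fin.prod_univ_two] using hX.integral_prod_eq_zero_of_unique hmeas ![i, j] 0
      (by simp [Fin.forall_fin_two, Ne.symm hij]) (h1 i)

theorem iIndepFun.integral_mul_mul_eq_zero (h3 : ∀ i, ∫ ω, X i ω ^ 3 ∂μ = 0) (i j k : ι) :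
    ∫ ω, X i ω * X j ω * X k ω ∂μ = 0 := by
  have of_unique (t₀ : Fin 3) (hκ : ∀ t ≠ t₀, ![i, j, k] t ≠ ![i, j, k] t₀) :
      ∫ ω, X i ω * X j ω * X k ω ∂μ = 0 := by
    simpa [Fin.prod_univ_three] using hX.integral_prod_eq_zero_of_unique hmeas _ t₀ hκ (h1 _)
  by_cases hij : i = j
  · by_cases hjk : j = k
    · subst hij hjk
      simpa [pow_succ] using h3 i
    · exact of_unique 2 (by intro t ht; fin_cases t <;> simp_all [eq_comm])
  · by_cases hik : i = k
    · subst hik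
      exact of_unique 1 (by intro t ht; fin_cases t <;> simp_all [eq_comm])
    · exact of_unique 0 (by intro t ht; fin_cases t <;> simp_all [eq_comm])

theorem iIndepFun.integral_mul_mul_mul_eq_ite {s m : ℝ} (h2 : ∀ i, ∫ ω, X i ω ^ 2 ∂μ = s)
    (h4 : ∀ i, ∫ ω, X i ω ^ 4 ∂μ = m) [DecidableEq ι] (i j k l : ι) :
    ∫ ω, X i ω * X j ω * X k ω * X l ω ∂μ =
      s ^ 2 * ((if i = j then 1 else 0) * (if k = l then 1 else 0)
        + (if i = k then 1 else 0) * (if j = l then 1 else 0)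
        + (if i = l then 1 else 0) * (if j = k then 1 else 0))
      + (m - 3 * s ^ 2) * ((if i = j then 1 else 0) * (if i = k then 1 else 0)
        * (if i = l then 1 else 0)) := by
  have of_unique (t₀ : Fin 4) (hκ : ∀ t ≠ t₀, ![i, j, k, l] t ≠ ![i, j, k, l] t₀) :
      ∫ ω, X i ω * X j ω * X k ω * X l ω ∂μ = 0 := by
    simpa [Fin.prod_univ_four] using hX.integral_prod_eq_zero_of_unique hmeas _ t₀ hκ (h1 _)
  have of_pair {a b : ι} (hab : a ≠ b)
      (h : ∀ ω, X i ω * X j ω * X k ω * X l ω = X a ω ^ 2 * X b ω ^ 2) :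
      ∫ ω, X i ω * X j ω * X k ω * X l ω ∂μ = s ^ 2 := by
    simp_rw [h]; exact hX.integral_sq_mul_sq hmeas h2 hab
  by_cases hij : i = j
  · subst hij
    by_cases hkl : k = l
    · subst hkl
      by_cases hik : i = k
      · subst hik
        simp only [if_true]
        rw [show (fun ω => X i ω * X i ω * X i ω * X i ω) = fun ω => X i ω ^ 4 by ext; ring,
          h4]
        ring
      · rw [of_pair hik fun ω => by ring]
        simp [hik]
    · by_cases hik : i = k
      · subst hik
        rw [of_unique 3 (by intro t ht; fin_cases t <;> simp_all [eq_comm])]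
        simp_all [eq_comm]
      · rw [of_unique 2 (by intro t ht; fin_cases t <;> simp_all [eq_comm])]
        simp_all [eq_comm]
  · by_cases hik : i = k
    · subst hik
      by_cases hjl : j = l
      · subst hjl
        rw [of_pair hij fun ω => by ring]
        simp [hij, Ne.symm hij]
      · rw [of_unique 1 (by intro t ht; fin_cases t <;> simp_all [eq_comm])]
        simp_all [eq_comm]
    · by_cases hil : i = l
      · subst hil
        by_cases hjk : j = k
        · subst hjk
          rw [of_pair hij fun ω => by ring]
          simp [hij]
        · rw [of_unique 1 (by intro t ht; fin_cases t <;> simp_all [eq_comm])]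
          simp_all [eq_comm]
      · rw [of_unique 0 (by intro t ht; fin_cases t <;> simp_all [eq_comm])]
        simp_all [eq_comm]

end Moments

section QuadForm

variable [IsProbabilityMeasure μ] [Fintype ι]
  (hX : iIndepFun X μ) (hmeas : ∀ i, Measurable (X i)) (hbdd : ∀ i, MemLp (X i) ⊤ μ)
  (h1 : ∀ i, ∫ ω, X i ω ∂μ = 0) (B : Matrix ι ι ℝ)
include hX hmeas hbdd h1

theorem iIndepFun.integral_quadForm [DecidableEq ι] {s : ℝ}
    (h2 : ∀ i, ∫ ω, X i ω ^ 2 ∂μ = s) :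
    ∫ ω, ∑ i, ∑ j, X i ω * B i j * X j ω ∂μ = s * B.trace := by
  have hw (i j : ι) : Integrable (fun ω => B i j * (X i ω * X j ω)) μ := by
    simpa [Fin.prod_univ_two] using
      (integrable_prod_of_memLp_top hbdd ![i, j]).const_mul (B i j)
  simp_rw [fun ω i j => show X i ω * B i j * X j ω = B i j * (X i ω * X j ω) by ring]
  simp_rw [integral_sum_sum hw, integral_const_mul, hX.integral_mul_eq_ite hmeas h1 h2]
  simp [Matrix.trace, mul_sum, mul_comm]

theorem iIndepFun.integral_quadForm_mul (h3 : ∀ i, ∫ ω, X i ω ^ 3 ∂μ = 0) (k : ι) :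
    ∫ ω, (∑ i, ∑ j, X i ω * B i j * X j ω) * X k ω ∂μ = 0 := by
  have hw (i j : ι) : Integrable (fun ω => B i j * (X i ω * X j ω * X k ω)) μ := by
    simpa [Fin.prod_univ_three] using
      (integrable_prod_of_memLp_top hbdd ![i, j, k]).const_mul (B i j)
  simp_rw [sum_mul, fun ω i j => show X i ω * B i j * X j ω * X k ω
    = B i j * (X i ω * X j ω * X k ω) by ring]
  simp_rw [integral_sum_sum hw, integral_const_mul, hX.integral_mul_mul_eq_zero hmeas h1 h3]
  simp

theorem iIndepFun.integral_quadForm_sq [DecidableEq ι] {s m : ℝ}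
    (h2 : ∀ i, ∫ ω, X i ω ^ 2 ∂μ = s) (h4 : ∀ i, ∫ ω, X i ω ^ 4 ∂μ = m) :
    ∫ ω, (∑ i, ∑ j, X i ω * B i j * X j ω) ^ 2 ∂μ
      = s ^ 2 * (B.trace ^ 2 + (B * Bᵀ).trace + (B * B).trace)
        + (m - 3 * s ^ 2) * ∑ i, B i i ^ 2 := by
  have hw (i j k l : ι) :
      Integrable (fun ω => B i j * B k l * (X i ω * X j ω * X k ω * X l ω)) μ := by
    simpa [Fin.prod_univ_four] using
      (integrable_prod_of_memLp_top hbdd ![i, j, k, l]).const_mul (B i j * B k l)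
  have hexp : ∀ ω, (∑ i, ∑ j, X i ω * B i j * X j ω) ^ 2
      = ∑ i, ∑ j, ∑ k, ∑ l, B i j * B k l * (X i ω * X j ω * X k ω * X l ω) := by
    intro ω
    simp_rw [sq, sum_mul, mul_sum]
    exact sum_congr rfl fun i _ => sum_congr rfl fun j _ => sum_congr rfl fun k _ =>
      sum_congr rfl fun l _ => by ring
  simp_rw [hexp]
  rw [integral_sum_sum fun i j => integrable_finsetSum _ fun k _ =>
    integrable_finsetSum _ fun l _ => hw i j k l]
  simp_rw [integral_sum_sum (hw _ _), integral_const_mul,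
    hX.integral_mul_mul_mul_eq_ite hmeas h1 h2 h4]
  simp only [mul_add, mul_ite, mul_one, mul_zero, sum_add_distrib, sum_ite_eq, mem_univ, if_true]
  simp [Matrix.trace, Matrix.mul_apply, sq, mul_sum, mul_comm]

theorem iIndepFun.variance_quadForm [DecidableEq ι] {s m : ℝ}
    (h2 : ∀ i, ∫ ω, X i ω ^ 2 ∂μ = s) (h4 : ∀ i, ∫ ω, X i ω ^ 4 ∂μ = m) :
    Var[fun ω => ∑ i, ∑ j, X i ω * B i j * X j ω; μ]
      = s ^ 2 * ((B * Bᵀ).trace + (B * B).trace) + (m - 3 * s ^ 2) * ∑ i, B i i ^ 2 := by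
  rw [variance_eq_sub ((memLp_top_quadForm hbdd B).mono_exponent le_top)]
  simp only [Pi.pow_apply]
  rw [hX.integral_quadForm_sq hmeas hbdd h1 B h2 h4, hX.integral_quadForm hmeas hbdd h1 B h2]
  ring

theorem iIndepFun.variance_quadForm_le (h3 : ∀ i, ∫ ω, X i ω ^ 3 ∂μ = 0) (c : ℝ)
    (L : ι → ℝ) :
    Var[fun ω => ∑ i, ∑ j, X i ω * B i j * X j ω; μ]
      ≤ ∫ ω, (c + ∑ i, ∑ j, X i ω * B i j * X j ω + ∑ i, L i * X i ω) ^ 2 ∂μ := by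
  set Q := fun ω => ∑ i, ∑ j, X i ω * B i j * X j ω
  set Lin := fun ω => ∑ i, L i * X i ω
  have hQ : MemLp Q 2 μ := (memLp_top_quadForm hbdd B).mono_exponent le_top
  have hLX (i : ι) : MemLp (fun ω => L i * X i ω) 2 μ :=
    ((hbdd i).const_mul (L i)).mono_exponent le_top
  have hLin : MemLp Lin 2 μ := memLp_finsetSum _ fun i _ => hLX i
  have hcov : cov[Q, Lin; μ] = 0 := by
    rw [covariance_fun_sum_right hLX hQ]
    refine sum_eq_zero fun k _ => ?_
    rw [covariance_const_mul_right, covariance_eq_sub hQ ((hbdd k).mono_exponent le_top)]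
    simp [Q, hX.integral_quadForm_mul hmeas hbdd h1 B h3 k, h1 k]
  calc Var[Q; μ] ≤ Var[Q; μ] + 2 * cov[Q, Lin; μ] + Var[Lin; μ] := by
        rw [hcov]; linarith [variance_nonneg Lin μ]
    _ = Var[fun ω => Q ω + Lin ω + c; μ] := by
        rw [← variance_add hQ hLin]; exact (variance_add_const (hQ.add hLin).1 c).symm
    _ ≤ ∫ ω, (c + Q ω + Lin ω) ^ 2 ∂μ := by
        refine (variance_le_expectation_sq (by fun_prop)).trans_eq ?_
        simp only [Pi.pow_apply]; congr 1; ext ω; ring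

end QuadForm

end ProbabilityTheory

end

section UniformLaw

variable {Ω : Type*} [MeasurableSpace Ω] {μ : Measure Ω} {Y : Ω → ℝ}

theorem integral_pow_of_map_eq_uniform (hY : Measurable Y)
    (hlaw : μ.map Y = (2 : ℝ≥0∞)⁻¹ • volume.restrict (Set.Icc (-1 : ℝ) 1)) (k : ℕ) :
    ∫ ω, Y ω ^ k ∂μ = (1 - (-1) ^ (k + 1)) / (2 * (k + 1)) := by
  rw [← integral_map (f := fun x => x ^ k) hY.aemeasurable (by fun_prop), hlaw,
    integral_smul_measure, integral_Icc_eq_integral_Ioc,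
    ← intervalIntegral.integral_of_le (by norm_num), integral_pow]
  simp only [ENNReal.toReal_inv, ENNReal.toReal_ofNat, smul_eq_mul, one_pow]
  field_simp

theorem memLp_top_of_map_eq_uniform (hY : Measurable Y)
    (hlaw : μ.map Y = (2 : ℝ≥0∞)⁻¹ • volume.restrict (Set.Icc (-1 : ℝ) 1)) :
    MemLp Y ⊤ μ := by
  have hIcc : ∀ᵐ y ∂(μ.map Y), y ∈ Set.Icc (-1 : ℝ) 1 := by
    rw [hlaw]; exact Measure.ae_smul_measure (ae_restrict_mem measurableSet_Icc) _
  refine memLp_top_of_bound hY.aestronglyMeasurable 1 ?_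
  filter_upwards [ae_of_ae_map hY.aemeasurable hIcc] with ω hω
  exact abs_le.2 hω

end UniformLaw

theorem Matrix.IsSymm.trace_mul_self {ι : Type*} [Fintype ι] {B : Matrix ι ι ℝ}
    (hB : B.IsSymm) :
    (B * B).trace = ∑ i, ∑ j, B i j ^ 2 := by
  simp only [Matrix.trace, Matrix.diag, Matrix.mul_apply, sq]
  exact sum_congr rfl fun i _ => sum_congr rfl fun j _ => by rw [hB.apply i j]

theorem Matrix.sum_sum_sq_pos {ι : Type*} [Fintype ι] {B : Matrix ι ι ℝ} (hB : B ≠ 0) :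
    0 < ∑ i, ∑ j, B i j ^ 2 := by
  obtain ⟨i, j, hij⟩ : ∃ i j, B i j ≠ 0 := by
    by_contra! h; exact hB (Matrix.ext h)
  exact sum_pos' (fun i _ => sum_nonneg fun j _ => sq_nonneg _)
    ⟨i, mem_univ _, sum_pos' (fun j _ => sq_nonneg _) ⟨j, mem_univ _, by positivity⟩⟩

theorem Matrix.sum_diag_sq_le {ι : Type*} [Fintype ι] (B : Matrix ι ι ℝ) :
    ∑ i, B i i ^ 2 ≤ ∑ i, ∑ j, B i j ^ 2 :=
  sum_le_sum fun i _ =>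
    single_le_sum (f := fun j => B i j ^ 2) (fun _ _ => sq_nonneg _) (mem_univ i)

/-- Inconsistency of linear rules for the quadratic demand model: for `X`
uniform on `[−1,1]ᵖ`, `f_ρ(x) = A + xᵀBx + Cᵀx` with symmetric `B ≠ 0`, every
affine rule `g(x) = d + Eᵀx` satisfies
`E[(f_ρ(X)−g(X))²] ≥ (2/9)tr(B²) − (2/15)ΣBᵢᵢ² > 0`. -/
theorem linear_rule_inconsistency_QD
    {Ω : Type*} [MeasurableSpace Ω] (μ : Measure Ω) [IsProbabilityMeasure μ]
    (p : ℕ) (X : Fin p → Ω → ℝ)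
    (hmeas : ∀ i, Measurable (X i))
    (hindep : iIndepFun X μ)
    (hunif : ∀ i, Measure.map (X i) μ
        = (2 : ℝ≥0∞)⁻¹ • (volume.restrict (Set.Icc (-1 : ℝ) 1)))
    (A : ℝ) (C : Fin p → ℝ) (B : Matrix (Fin p) (Fin p) ℝ) (hB : B.IsSymm)
    (hBnz : B ≠ 0) :
    (∀ (d : ℝ) (E : Fin p → ℝ),
      2/9 * Matrix.trace (B * B) - 2/15 * ∑ i, (B i i)^2
        ≤ ∫ ω, (A + (∑ i, ∑ j, X i ω * B i j * X j ω) + (∑ i, C i * X i ω)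
            - (d + ∑ i, E i * X i ω))^2 ∂μ) ∧
    0 < 2/9 * Matrix.trace (B * B) - 2/15 * ∑ i, (B i i)^2 := by
  have hmom (i : Fin p) := integral_pow_of_map_eq_uniform (hmeas i) (hunif i)
  have h1 (i : Fin p) : ∫ ω, X i ω ∂μ = 0 := by simpa using hmom i 1
  have h2 (i : Fin p) : ∫ ω, X i ω ^ 2 ∂μ = 1 / 3 := by norm_num [hmom]
  have h3 (i : Fin p) : ∫ ω, X i ω ^ 3 ∂μ = 0 := by norm_num [hmom]
  have h4 (i : Fin p) : ∫ ω, X i ω ^ 4 ∂μ = 1 / 5 := by norm_num [hmom]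
  have hbdd (i : Fin p) := memLp_top_of_map_eq_uniform (hmeas i) (hunif i)
  have hvar := hindep.variance_quadForm hmeas hbdd h1 B h2 h4
  rw [hB.eq] at hvar
  refine ⟨fun d E => ?_, ?_⟩
  · calc _ = Var[fun ω => ∑ i, ∑ j, X i ω * B i j * X j ω; μ] := by rw [hvar]; ring
      _ ≤ _ := hindep.variance_quadForm_le hmeas hbdd h1 B h3 (A - d) (C - E)
      _ = _ := by
        congr 1; ext ω
        simp only [Pi.sub_apply, sub_mul, sum_sub_distrib]
        ring
  · rw [hB.trace_mul_self]
    linarith [B.sum_sum_sq_pos hBnz, B.sum_diag_sq_le]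
end
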